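/- An extremal lattice L is trim (i.e., additionally left modular) if and only if every cover relation y ⋖ z in L is overlapping, meaning y_M ∩ z_J ≠ ∅, if and only if every relation y < z is overlapping. -/

import Mathlib

/-- An element `x` of a lattice is *left modular* if `(y ⊔ x) ⊓ z = y ⊔ (x ⊓ z)`
for all `y ≤ z`. -/
def LeftModular {L : Type*} [Lattice L] (x : L) : Prop :=
  ∀ y z : L, y ≤ z → (y ⊔ x) ⊓ z = y ⊔ (x ⊓ z)

/-- The data of an extremal lattice of length `n` together with a fixed
maximal-length chain `x₀ ⋖ ⋯ ⋖ xₙ` and the induced numberings of the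
join-irreducibles `j₁, …, jₙ` and meet-irreducibles `m₁, …, mₙ`. -/
structure ExtremalChainData (L : Type*) [Lattice L] [Fintype L] [BoundedOrder L]
    (n : ℕ) where
  x : Fin (n + 1) → L
  x_strictMono : StrictMono x
  x_bot : x 0 = ⊥
  x_top : x (Fin.last n) = ⊤
  maxlen : ∀ (m : ℕ) (c : Fin (m + 1) → L), StrictMono c → m ≤ n
  j : Fin n → L
  m : Fin n → L
  j_irr : ∀ i, SupIrred (j i)
  m_irr : ∀ i, InfIrred (m i)
  j_inj : Function.Injective j
  m_inj : Function.Injective m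
  j_surj : ∀ a : L, SupIrred a → a ∈ Set.range j
  m_surj : ∀ a : L, InfIrred a → a ∈ Set.range m
  x_eq_sup : ∀ i : Fin (n + 1),
    x i = (Finset.univ.filter fun k : Fin n => (k : ℕ) < (i : ℕ)).sup j
  x_eq_inf : ∀ i : Fin (n + 1),
    x i = (Finset.univ.filter fun k : Fin n => (i : ℕ) ≤ (k : ℕ)).inf m

namespace ExtremalChainData

variable {L : Type*} [Lattice L] [Fintype L] [BoundedOrder L] {n : ℕ}

/-- `x_J`: the set of indices of join-irreducibles lying below `a`. -/
def setJ (D : ExtremalChainData L n) (a : L) : Set (Fin n) := {i | D.j i ≤ a}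

/-- `x_M`: the set of indices of meet-irreducibles lying above `a`. -/
def setM (D : ExtremalChainData L n) (a : L) : Set (Fin n) := {i | a ≤ D.m i}

/-- The Galois graph: a directed edge `i → k` when `jᵢ ≰ m_k` and `i ≠ k`. -/
def galoisEdge (D : ExtremalChainData L n) (i k : Fin n) : Prop :=
  ¬ D.j i ≤ D.m k ∧ i ≠ k

/-- The left modular labelling: `i` is the label of the cover `y ⋖ z` iff `i` is
minimal with `y ⊔ (xᵢ ⊓ z) = z`. -/
def IsLabel (D : ExtremalChainData L n) (y z : L) (i : Fin n) : Prop :=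
  y ⊔ (D.x i.succ ⊓ z) = z ∧ ∀ k : Fin n, y ⊔ (D.x k.succ ⊓ z) = z → i ≤ k

open scoped Classical in
/-- `D^γ(a)`: the set of labels of cover relations below `a`. -/
noncomputable def downLabels (D : ExtremalChainData L n) (a : L) : Finset (Fin n) :=
  Finset.univ.filter fun i => ∃ y, y ⋖ a ∧ D.IsLabel y a i

open scoped Classical in
/-- `U^γ(a)`: the set of labels of cover relations above `a`. -/
noncomputable def upLabels (D : ExtremalChainData L n) (a : L) : Finset (Fin n) :=
  Finset.univ.filter fun i => ∃ z, a ⋖ z ∧ D.IsLabel a z i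

/-- The fixed chain consists of left modular elements, i.e. the lattice is trim. -/
def IsTrim (D : ExtremalChainData L n) : Prop := ∀ i, LeftModular (D.x i)

end ExtremalChainData

open ExtremalChainData

/-! Fix a maximal chain `c` of left modular elements. As `L` has exactly `n` join- and `n`
meet-irreducibles, at each step `cᵢ < cᵢ₊₁` exactly one `jₖ` enters (`jₖ ≤ cᵢ₊₁`, `jₖ ≰ cᵢ`)
and exactly one `mₖ'` leaves (`cᵢ ≤ mₖ'`, `cᵢ₊₁ ≰ mₖ'`). Since `jₖ ≰ mₖ`, the step at which `mₖ`
leaves is never later than the one at which `jₖ` enters; both assignments being bijections onto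
the steps, they agree. Given `y < z`, let `i` be the first step at which `cᵢ ⊓ z ≤ y` fails: the
join-irreducible entering there lies below `z` and, by left modularity of `cᵢ`, the
meet-irreducible leaving there lies above `y`, and they carry the same index.
Conversely, a failure `y ⊔ (x ⊓ z) < (y ⊔ x) ⊓ z` of left modularity at `x = xₜ` cannot be
overlapping: whether its index lies below `t` or not, it would force `jₖ ≤ mₖ`. -/

theorem exists_supIrred_le_not_le {α : Type*} [SemilatticeSup α] [OrderBot α] [WellFoundedLT α]
    {a b : α} (h : ¬ b ≤ a) : ∃ p, SupIrred p ∧ p ≤ b ∧ ¬ p ≤ a := by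
  obtain ⟨s, rfl, hs⟩ := exists_supIrred_decomposition b
  by_contra! hle
  exact h (Finset.sup_le fun p hp => hle p (hs hp) (Finset.le_sup (f := id) hp))

theorem exists_infIrred_ge_not_ge {α : Type*} [SemilatticeInf α] [OrderTop α] [WellFoundedGT α]
    {a b : α} (h : ¬ b ≤ a) : ∃ p, InfIrred p ∧ a ≤ p ∧ ¬ b ≤ p :=
  exists_supIrred_le_not_le (α := αᵒᵈ) h

section MaximalChain

variable {α : Type*} [PartialOrder α] {n : ℕ} {c : Fin (n + 1) → α}

theorem StrictMono.apply_zero_eq_bot [OrderBot α] (hc : StrictMono c)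
    (hmax : ∀ (m : ℕ) (c' : Fin (m + 1) → α), StrictMono c' → m ≤ n) : c 0 = ⊥ := by
  by_contra h
  have hcons : StrictMono (Fin.cons ⊥ c : Fin (n + 2) → α) :=
    Fin.strictMono_cons.2 ⟨fun t => (bot_lt_iff_ne_bot.2 h).trans_le (hc.monotone t.zero_le), hc⟩
  exact (hmax (n + 1) _ hcons).not_gt n.lt_succ_self

theorem StrictMono.apply_last_eq_top [OrderTop α] (hc : StrictMono c)
    (hmax : ∀ (m : ℕ) (c' : Fin (m + 1) → α), StrictMono c' → m ≤ n) : c (Fin.last n) = ⊤ := by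
  by_contra h
  have hsnoc : StrictMono ((Fin.last (n + 1)).insertNth ⊤ c) :=
    (Fin.strictMono_insertNth_iff _ _ _).2 ⟨hc, fun t _ =>
      (hc.monotone (Fin.le_last t)).trans_lt (lt_top_iff_ne_top.2 h),
      fun t ht => absurd ht (Fin.castSucc_lt_last t).not_ge⟩
  exact (hmax (n + 1) _ hsnoc).not_gt n.lt_succ_self

end MaximalChain

namespace Fin

theorem exists_not_castSucc_and_succ {n : ℕ} {P : Fin (n + 1) → Prop} (h0 : ¬ P 0)
    (hlast : P (last n)) : ∃ i : Fin n, ¬ P i.castSucc ∧ P i.succ := by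
  by_contra! h
  exact induction h0 h (last n) hlast

theorem eq_of_not_castSucc_and_succ {n : ℕ} {P : Fin (n + 1) → Prop} (hP : Monotone P)
    {i i' : Fin n} (hi : ¬ P i.castSucc ∧ P i.succ) (hi' : ¬ P i'.castSucc ∧ P i'.succ) :
    i = i' := by
  by_contra hne
  rcases lt_or_gt_of_ne hne with h | h
  · exact hi'.1 (hP (succ_le_castSucc_iff.2 h) hi.2)
  · exact hi.1 (hP (succ_le_castSucc_iff.2 h) hi'.2)

theorem eq_of_surjective_of_le {n : ℕ} {f g : Fin n → Fin n} (hf : f.Surjective)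
    (hg : g.Surjective) (hle : ∀ k, f k ≤ g k) : f = g := by
  have hsum : ∑ k, (f k).val = ∑ k, (g k).val := by
    rw [hf.bijective_of_finite.sum_comp Fin.val, hg.bijective_of_finite.sum_comp Fin.val]
  funext k
  exact Fin.ext <| (Finset.sum_eq_sum_iff_of_le fun k _ => Fin.le_iff_val_le_val.1 (hle k)).1
    hsum k (Finset.mem_univ k)

end Fin

namespace ExtremalChainData

variable {L : Type*} [Lattice L] [Fintype L] [BoundedOrder L] {n : ℕ}
variable (D : ExtremalChainData L n)

theorem j_le_x {k : Fin n} {t : Fin (n + 1)} (h : (k : ℕ) < t) : D.j k ≤ D.x t := by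
  rw [D.x_eq_sup]
  exact Finset.le_sup (by simpa using h)

theorem x_le_m {k : Fin n} {t : Fin (n + 1)} (h : (t : ℕ) ≤ k) : D.x t ≤ D.m k := by
  rw [D.x_eq_inf]
  exact Finset.inf_le (by simpa using h)

theorem x_le_of_forall_j_le {a : L} {t : Fin (n + 1)}
    (h : ∀ k : Fin n, (k : ℕ) < t → D.j k ≤ a) : D.x t ≤ a := by
  rw [D.x_eq_sup]
  exact Finset.sup_le fun k hk => h k (by simpa using hk)

theorem le_x_of_forall_le_m {a : L} {t : Fin (n + 1)}
    (h : ∀ k : Fin n, (t : ℕ) ≤ k → a ≤ D.m k) : a ≤ D.x t := by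
  rw [D.x_eq_inf]
  exact Finset.le_inf fun k hk => h k (by simpa using hk)

theorem j_not_le_m (i : Fin n) : ¬ D.j i ≤ D.m i := by
  intro h
  have hx_succ_le_m : D.x i.succ ≤ D.m i := D.x_le_of_forall_j_le fun k hk => by
    rcases (show k ≤ i by simpa [Nat.lt_succ_iff] using hk).lt_or_eq with hk | rfl
    · exact (D.j_le_x (t := i.castSucc) (by simpa using hk)).trans (D.x_le_m le_rfl)
    · exact h
  refine (D.x_strictMono i.castSucc_lt_succ).not_ge (D.le_x_of_forall_le_m fun k hk => ?_)
  rcases (show (i : ℕ) ≤ k by simpa using hk).eq_or_lt with hik | hik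
  · rw [← Fin.ext hik]
    exact hx_succ_le_m
  · exact D.x_le_m (by simpa using hik)

theorem exists_j_le_not_le {a b : L} (h : ¬ b ≤ a) : ∃ k, D.j k ≤ b ∧ ¬ D.j k ≤ a := by
  obtain ⟨p, hp, hpb, hpa⟩ := exists_supIrred_le_not_le h
  obtain ⟨k, rfl⟩ := D.j_surj p hp
  exact ⟨k, hpb, hpa⟩

theorem exists_m_ge_not_ge {a b : L} (h : ¬ b ≤ a) : ∃ k, a ≤ D.m k ∧ ¬ b ≤ D.m k := by
  obtain ⟨p, hp, hap, hbp⟩ := exists_infIrred_ge_not_ge h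
  obtain ⟨k, rfl⟩ := D.m_surj p hp
  exact ⟨k, hap, hbp⟩

theorem leftModular_x_of_overlapping (hQ : ∀ y z : L, y < z → (D.setM y ∩ D.setJ z).Nonempty)
    (t : Fin (n + 1)) : LeftModular (D.x t) := by
  intro y z hyz
  by_contra hne
  have hlt : y ⊔ (D.x t ⊓ z) < (y ⊔ D.x t) ⊓ z :=
    (sup_le (le_inf le_sup_left hyz) (inf_le_inf_right z le_sup_right)).lt_of_ne (Ne.symm hne)
  obtain ⟨i, hiM, hiJ⟩ := hQ _ _ hlt
  have hiM : y ⊔ (D.x t ⊓ z) ≤ D.m i := hiM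
  have hiJ : D.j i ≤ (y ⊔ D.x t) ⊓ z := hiJ
  refine D.j_not_le_m i ?_
  rcases Nat.lt_or_ge i t with hit | hti
  · exact (le_inf (D.j_le_x hit) (hiJ.trans inf_le_right)).trans (le_sup_right.trans hiM)
  · exact hiJ.trans (inf_le_left.trans (sup_le (le_sup_left.trans hiM) (D.x_le_m hti)))

theorem overlapping_of_overlapping_covBy
    (hP : ∀ y z : L, y ⋖ z → (D.setM y ∩ D.setJ z).Nonempty) {y z : L} (hyz : y < z) :
    (D.setM y ∩ D.setJ z).Nonempty := by
  obtain ⟨w, hyw, hwz⟩ := exists_covBy_le_of_lt hyz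
  obtain ⟨i, hiM, hiJ⟩ := hP y w hyw
  exact ⟨i, hiM, le_trans hiJ hwz⟩

section Chain

variable (c : Fin (n + 1) → L)

def JoinEntersAt (k i : Fin n) : Prop := ¬ D.j k ≤ c i.castSucc ∧ D.j k ≤ c i.succ

def MeetLeavesAt (k i : Fin n) : Prop := c i.castSucc ≤ D.m k ∧ ¬ c i.succ ≤ D.m k

variable {D c} {k k' i i' : Fin n}

theorem JoinEntersAt.unique (hc : Monotone c) (hi : D.JoinEntersAt c k i)
    (hi' : D.JoinEntersAt c k i') : i = i' :=
  Fin.eq_of_not_castSucc_and_succ (P := fun t => D.j k ≤ c t) (fun _ _ h hk => hk.trans (hc h))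
    hi hi'

theorem MeetLeavesAt.unique (hc : Monotone c) (hi : D.MeetLeavesAt c k i)
    (hi' : D.MeetLeavesAt c k i') : i = i' :=
  Fin.eq_of_not_castSucc_and_succ (P := fun t => ¬ c t ≤ D.m k)
    (fun _ _ h hk hle => hk ((hc h).trans hle)) ⟨not_not.2 hi.1, hi.2⟩ ⟨not_not.2 hi'.1, hi'.2⟩

theorem MeetLeavesAt.le_of_joinEntersAt (hc : Monotone c) (hm : D.MeetLeavesAt c k i')
    (hj : D.JoinEntersAt c k i) : i' ≤ i := by
  by_contra! h
  exact D.j_not_le_m k (hj.2.trans ((hc (Fin.succ_le_castSucc_iff.2 h)).trans hm.1))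

variable (D)

theorem exists_joinEntersAt (hc : StrictMono c) (k : Fin n) : ∃ i, D.JoinEntersAt c k i :=
  Fin.exists_not_castSucc_and_succ (P := fun t => D.j k ≤ c t)
    (by rw [hc.apply_zero_eq_bot D.maxlen, le_bot_iff]; exact (D.j_irr k).ne_bot)
    (by rw [hc.apply_last_eq_top D.maxlen]; exact le_top)

theorem exists_meetLeavesAt (hc : StrictMono c) (k : Fin n) : ∃ i, D.MeetLeavesAt c k i := by
  obtain ⟨i, hi⟩ := Fin.exists_not_castSucc_and_succ (P := fun t => ¬ c t ≤ D.m k)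
    (by rw [not_not, hc.apply_zero_eq_bot D.maxlen]; exact bot_le)
    (by rw [hc.apply_last_eq_top D.maxlen, top_le_iff]; exact (D.m_irr k).ne_top)
  exact ⟨i, not_not.1 hi.1, hi.2⟩

theorem exists_joinEntersAt_step (hc : StrictMono c) (i : Fin n) : ∃ k, D.JoinEntersAt c k i :=
  (D.exists_j_le_not_le (hc i.castSucc_lt_succ).not_ge).imp fun _ hk => ⟨hk.2, hk.1⟩

theorem exists_meetLeavesAt_step (hc : StrictMono c) (i : Fin n) : ∃ k, D.MeetLeavesAt c k i :=
  D.exists_m_ge_not_ge (hc i.castSucc_lt_succ).not_ge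

theorem eq_of_joinEntersAt_of_meetLeavesAt (hc : StrictMono c) (hk : D.JoinEntersAt c k i)
    (hk' : D.MeetLeavesAt c k' i) : k = k' := by
  choose e he using D.exists_joinEntersAt hc
  choose l hl using D.exists_meetLeavesAt hc
  have he_surj : e.Surjective := fun i =>
    (D.exists_joinEntersAt_step hc i).imp fun k hk => (he k).unique hc.monotone hk
  have hl_surj : l.Surjective := fun i =>
    (D.exists_meetLeavesAt_step hc i).imp fun k hk => (hl k).unique hc.monotone hk
  have hle : l = e := Fin.eq_of_surjective_of_le hl_surj he_surj fun k =>
    (hl k).le_of_joinEntersAt hc.monotone (he k)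
  refine Finite.injective_iff_surjective.2 he_surj ?_
  rw [(he k).unique hc.monotone hk, ← hle, (hl k').unique hc.monotone hk']

theorem overlapping_of_leftModular_chain (hc : StrictMono c) (hlm : ∀ i, LeftModular (c i))
    {y z : L} (hyz : y < z) : (D.setM y ∩ D.setJ z).Nonempty := by
  obtain ⟨i, hi_le, hi_not_le⟩ := Fin.exists_not_castSucc_and_succ (P := fun t => ¬ c t ⊓ z ≤ y)
    (by rw [not_not, hc.apply_zero_eq_bot D.maxlen, bot_inf_eq]; exact bot_le)
    (by rw [hc.apply_last_eq_top D.maxlen, top_inf_eq]; exact hyz.not_ge)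
  rw [not_not] at hi_le
  have hj : ¬ c i.succ ⊓ z ≤ c i.castSucc := fun h =>
    hi_not_le ((le_inf h inf_le_right).trans hi_le)
  have hm : ¬ c i.succ ≤ y ⊔ c i.castSucc := fun h => hi_not_le <|
    calc c i.succ ⊓ z ≤ (y ⊔ c i.castSucc) ⊓ z := inf_le_inf_right z h
      _ = y ⊔ (c i.castSucc ⊓ z) := hlm _ y z hyz.le
      _ = y := sup_eq_left.2 hi_le
  obtain ⟨k, hkz, hki⟩ := D.exists_j_le_not_le hj
  obtain ⟨k', hk'y, hk'i⟩ := D.exists_m_ge_not_ge hm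
  obtain rfl : k = k' := D.eq_of_joinEntersAt_of_meetLeavesAt hc
    ⟨hki, hkz.trans inf_le_left⟩ ⟨le_sup_right.trans hk'y, hk'i⟩
  exact ⟨k, le_sup_left.trans hk'y, hkz.trans inf_le_right⟩

end Chain

end ExtremalChainData

/-- An extremal lattice is trim (possesses a maximal chain of left modular
elements) iff every cover relation `y ⋖ z` is overlapping (`y_M ∩ z_J ≠ ∅`)
iff every relation `y < z` is overlapping. -/
theorem trim_iff_overlapping {L : Type*} [Lattice L] [Fintype L] [BoundedOrder L]
    {n : ℕ} (D : ExtremalChainData L n) :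
    ((∃ c : Fin (n + 1) → L, StrictMono c ∧ ∀ i, LeftModular (c i)) ↔
      (∀ y z : L, y ⋖ z → (D.setM y ∩ D.setJ z).Nonempty)) ∧
    ((∀ y z : L, y ⋖ z → (D.setM y ∩ D.setJ z).Nonempty) ↔
      (∀ y z : L, y < z → (D.setM y ∩ D.setJ z).Nonempty)) := by
  have covBy_iff_lt : (∀ y z : L, y ⋖ z → (D.setM y ∩ D.setJ z).Nonempty) ↔
      (∀ y z : L, y < z → (D.setM y ∩ D.setJ z).Nonempty) :=
    ⟨fun h _ _ => D.overlapping_of_overlapping_covBy h, fun h y z hyz => h y z hyz.lt⟩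
  refine ⟨⟨?_, fun h => ?_⟩, covBy_iff_lt⟩
  · rintro ⟨c, hc, hlm⟩ y z hyz
    exact D.overlapping_of_leftModular_chain hc hlm hyz.lt
  · exact ⟨D.x, D.x_strictMono, D.leftModular_x_of_overlapping (covBy_iff_lt.1 h)⟩
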